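/- Let N ≥ 1 and let σ₁ > 0. Let I be a finite index set and, for each k ∈ I, let σ_k ∈ ℝ satisfy 0 ≤ σ_k < σ₁. Let {a_k}_{k∈I} ∪ {b_k}_{k∈I} be a family of vectors in ℝ^N that is orthonormal (each vector has unit Euclidean norm and any two distinct vectors of the family are orthogonal). Then the matrix H := ∑_{k∈I} [σ₁/(σ₁² − σ_k²)] a_k a_kᵀ + ∑_{k∈I} [σ₁/(σ₁² − σ_k²)] b_k b_kᵀ + ∑_{k∈I} [σ_k/(σ₁² − σ_k²)] (a_k b_kᵀ + b_k a_kᵀ) is symmetric positive semidefinite. -/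

import Mathlib

open Matrix

private lemma quad_vecMulVec {N : ℕ} (u v x : Fin N → ℝ) :
    x ⬝ᵥ (vecMulVec u v *ᵥ x) = (u ⬝ᵥ x) * (v ⬝ᵥ x) := by
  simp only [dotProduct, mulVec, vecMulVec_apply, Finset.mul_sum, Finset.sum_mul]
  rw [Finset.sum_comm]
  congr 1; ext j; congr 1; ext i; ring

private lemma posSemidef_add' {N : ℕ} {A B : Matrix (Fin N) (Fin N) ℝ}
    (hA : A.PosSemidef) (hB : B.PosSemidef) : (A + B).PosSemidef := by
  refine .of_dotProduct_mulVec_nonneg (hA.1.add hB.1) fun x => ?_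
  rw [add_mulVec, dotProduct_add]
  exact add_nonneg (hA.dotProduct_mulVec_nonneg x) (hB.dotProduct_mulVec_nonneg x)

private lemma posSemidef_block {N : ℕ} (c d : ℝ) (hd : 0 ≤ d) (hdc : d ≤ c)
    (u v : Fin N → ℝ) :
    (c • vecMulVec u u + c • vecMulVec v v
      + d • (vecMulVec u v + vecMulVec v u)).PosSemidef := by
  rw [posSemidef_iff_dotProduct_mulVec]
  constructor
  · show _ᴴ = _
    ext i j
    simp [conjTranspose_apply, vecMulVec_apply, mul_comm]
    ring
  · intro x
    have hx : (star x : Fin N → ℝ) = x := by simp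
    rw [hx]
    simp only [add_mulVec, dotProduct_add, smul_mulVec, dotProduct_smul,
      quad_vecMulVec, smul_eq_mul]
    set α := u ⬝ᵥ x
    set β := v ⬝ᵥ x
    nlinarith [sq_nonneg (α + β), sq_nonneg (α - β), sq_nonneg α, sq_nonneg β]

/-- **Positive semidefiniteness of the operator-norm Hessian.** Let `σ₁ > 0`, let
`0 ≤ σ_k < σ₁` for `k` in a finite index set, and let `{a_k} ∪ {b_k}` be an orthonormal
family of vectors in `ℝ^N`. Then
`H = ∑_k [σ₁/(σ₁² − σ_k²)] a_k a_kᵀ + ∑_k [σ₁/(σ₁² − σ_k²)] b_k b_kᵀ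
   + ∑_k [σ_k/(σ₁² − σ_k²)] (a_k b_kᵀ + b_k a_kᵀ)` is positive semidefinite. -/
theorem operatorNorm_hessian_posSemidef {N : ℕ} (hN : 1 ≤ N)
    {I : Type*} [Fintype I] [DecidableEq I]
    (σ₁ : ℝ) (hσ₁ : 0 < σ₁)
    (s : I → ℝ) (hs0 : ∀ k, 0 ≤ s k) (hs1 : ∀ k, s k < σ₁)
    (a b : I → Fin N → ℝ)
    (haa : ∀ k l, a k ⬝ᵥ a l = if k = l then 1 else 0)
    (hbb : ∀ k l, b k ⬝ᵥ b l = if k = l then 1 else 0)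
    (hab : ∀ k l, a k ⬝ᵥ b l = 0)
    (H : Matrix (Fin N) (Fin N) ℝ)
    (hH : H = ∑ k, (σ₁ / (σ₁ ^ 2 - s k ^ 2)) • vecMulVec (a k) (a k)
            + ∑ k, (σ₁ / (σ₁ ^ 2 - s k ^ 2)) • vecMulVec (b k) (b k)
            + ∑ k, (s k / (σ₁ ^ 2 - s k ^ 2)) •
                (vecMulVec (a k) (b k) + vecMulVec (b k) (a k))) :
    H.PosSemidef := by
  have hH' : H = ∑ k, ((σ₁ / (σ₁ ^ 2 - s k ^ 2)) • vecMulVec (a k) (a k)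
      + (σ₁ / (σ₁ ^ 2 - s k ^ 2)) • vecMulVec (b k) (b k)
      + (s k / (σ₁ ^ 2 - s k ^ 2)) •
          (vecMulVec (a k) (b k) + vecMulVec (b k) (a k))) := by
    rw [hH, Finset.sum_add_distrib, Finset.sum_add_distrib]
  rw [hH']
  have : ∀ k : I, ((σ₁ / (σ₁ ^ 2 - s k ^ 2)) • vecMulVec (a k) (a k)
      + (σ₁ / (σ₁ ^ 2 - s k ^ 2)) • vecMulVec (b k) (b k)
      + (s k / (σ₁ ^ 2 - s k ^ 2)) •
          (vecMulVec (a k) (b k) + vecMulVec (b k) (a k))).PosSemidef := by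
    intro k
    have hden : 0 < σ₁ ^ 2 - s k ^ 2 := by nlinarith [hs0 k, hs1 k]
    refine posSemidef_block _ _ ?_ ?_ _ _
    · exact div_nonneg (hs0 k) hden.le
    · exact div_le_div_of_nonneg_right (hs1 k).le hden.le
  refine Finset.sum_induction _ _ (fun A B hA hB => posSemidef_add' hA hB)
    Matrix.PosSemidef.zero (fun k _ => this k)
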